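/- There is a concrete instance where Stage is strictly contained in End: take D = {a, b, c₁, …, cₙ} with derivation relation: Δa derivable always (when a live); Δb derivable from Δa and b live; Δcᵢ derivable from a live, Δb, and cᵢ live. Then End(P,D) = {a, b, c₁,…,cₙ} while Stage(P,D) = {a, b}; in particular Stage(P,D) ⊊ End(P,D). -/

import Mathlib

/-!
Both semantics are computed by iterating an inflationary operator from `∅` until it reaches a
fixpoint. The two iterations agree for the first two rounds (deleting `a`, then `b`); they
differ in the third, where the rule for the `cᵢ` needs `a` live: under stage semantics `a` was
removed from the live set in round one, so nothing more is derived, while under end semantics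
the live set stays `D` and every `cᵢ` is derived.
-/

open Function

section Semantics

variable {α : Type*}

def stageStep (D : Set α) (derive : Set α → Set α → α → Prop) (S : Set α) : Set α :=
  S ∪ {x | x ∈ D \ S ∧ derive (D \ S) S x}

def endStep (D : Set α) (derive : Set α → Set α → α → Prop) (S : Set α) : Set α :=
  S ∪ {x | x ∈ D ∧ derive D S x}

theorem iterate_add_eq_of_iterate_eq_of_isFixedPt {f : α → α} {s t : α} {m : ℕ}
    (hreach : f^[m] s = t) (hfix : IsFixedPt f t) (k : ℕ) : f^[k + m] s = t := by
  rw [iterate_add_apply, hreach, iterate_fixed hfix]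

end Semantics

namespace StageEndExample

/-- `0` plays `a`, `1` plays `b` and every `x ≥ 2` plays some `cᵢ`; `L` is the live set and
`Δ` the set of tuples deleted so far. -/
def rule (L Δ : Set ℕ) (x : ℕ) : Prop :=
  (x = 0 ∧ 0 ∈ L) ∨ (x = 1 ∧ 0 ∈ Δ ∧ 1 ∈ L) ∨ (2 ≤ x ∧ x ∈ L ∧ 0 ∈ L ∧ 1 ∈ Δ)

def domain (n : ℕ) : Set ℕ := {x | x < n + 2}

variable (n : ℕ)

theorem stageStep_empty : stageStep (domain n) rule ∅ = {0} := by
  ext x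
  grind [stageStep, domain, rule]

theorem stageStep_zero : stageStep (domain n) rule {0} = {0, 1} := by
  ext x
  grind [stageStep, domain, rule]

theorem isFixedPt_stageStep : IsFixedPt (stageStep (domain n) rule) {0, 1} := by
  ext x
  grind [stageStep, domain, rule]

theorem endStep_empty : endStep (domain n) rule ∅ = {0} := by
  ext x
  grind [endStep, domain, rule]

theorem endStep_zero : endStep (domain n) rule {0} = {0, 1} := by
  ext x
  grind [endStep, domain, rule]

theorem endStep_zero_one : endStep (domain n) rule {0, 1} = domain n := by
  ext x
  grind [endStep, domain, rule]

theorem isFixedPt_endStep : IsFixedPt (endStep (domain n) rule) (domain n) := by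
  ext x
  grind [endStep, domain, rule]

theorem stage_iterate_two : (stageStep (domain n) rule)^[2] ∅ = {0, 1} := by
  rw [iterate_succ_apply', iterate_one, stageStep_empty, stageStep_zero]

theorem end_iterate_three : (endStep (domain n) rule)^[3] ∅ = domain n := by
  rw [iterate_succ_apply', iterate_succ_apply', iterate_one, endStep_empty, endStep_zero,
    endStep_zero_one]

theorem pair_ssubset_domain {n : ℕ} (hn : 1 ≤ n) : ({0, 1} : Set ℕ) ⊂ domain n :=
  (Set.ssubset_iff_of_subset (by grind [domain])).mpr ⟨2, by grind [domain], by simp⟩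

end StageEndExample

open StageEndExample in
/-- A concrete instance where stage semantics is strictly contained in end
semantics.  `D = {0, 1, 2, …, n+1}` encodes `{a, b, c₁, …, cₙ}`; the rules are:
delete 0 when 0 is live; delete 1 when 0 is deleted and 1 is live; delete any
`x ≥ 2` when `x` and 0 are live and 1 is deleted.  Stage semantics reaches
`{0, 1}` whereas end semantics reaches all of `D`, a strict superset. -/
theorem stmt_14 (n : ℕ) (hn : 1 ≤ n)
    (D : Set ℕ) (hD : D = {x | x < n + 2})
    (derive : Set ℕ → Set ℕ → ℕ → Prop)
    (hderive : ∀ L Δ x, derive L Δ x ↔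
      ((x = 0 ∧ 0 ∈ L) ∨ (x = 1 ∧ 0 ∈ Δ ∧ 1 ∈ L) ∨
        (2 ≤ x ∧ x ∈ L ∧ 0 ∈ L ∧ 1 ∈ Δ))) :
    (∀ k : ℕ,
      (fun S => S ∪ {x | x ∈ D \ S ∧ derive (D \ S) S x})^[k + 2] ∅ = {0, 1}) ∧
    (∀ k : ℕ,
      (fun S => S ∪ {x | x ∈ D ∧ derive D S x})^[k + 3] ∅ = D) ∧
    ({0, 1} : Set ℕ) ⊂ D := by
  obtain rfl : derive = rule := funext fun L => funext fun Δ => funext fun x =>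
    propext (hderive L Δ x)
  obtain rfl : D = domain n := hD
  exact ⟨iterate_add_eq_of_iterate_eq_of_isFixedPt (stage_iterate_two n) (isFixedPt_stageStep n),
    iterate_add_eq_of_iterate_eq_of_isFixedPt (end_iterate_three n) (isFixedPt_endStep n),
    pair_ssubset_domain hn⟩
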